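/- Integrated Gradients is symmetry preserving: if F : ℝⁿ → ℝ is continuously differentiable and symmetric with respect to coordinates i and j (i.e., swapping the i-th and j-th components of any input leaves F unchanged), and if x_i = x_j and x'_i = x'_j for the target x and baseline x', then the IG attributions satisfy I_i(x) = I_j(x). -/

import Mathlib

/-!
Swapping coordinates `i` and `j` is a linear automorphism `σ` with `F ∘ σ = F` that fixes
every point of the segment from `x'` to `x` (since `x i = x j` and `x' i = x' j`). Differentiating
`F ∘ σ = F` at such a point `z` gives `dF_z ∘ σ = dF_z`, and `σ` sends `e_i` to `e_j`, so the
integrands of the two attributions agree pointwise.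
-/

open Function Equiv

section

variable {𝕜 E G : Type*} [NontriviallyNormedField 𝕜] [NormedAddCommGroup E] [NormedSpace 𝕜 E]
  [NormedAddCommGroup G] [NormedSpace 𝕜 G]

theorem fderiv_apply_map_eq_of_comp_eq {f : E → G} (σ : E ≃L[𝕜] E) (hf : f ∘ σ = f) {z : E}
    (hz : σ z = z) (v : E) : fderiv 𝕜 f z (σ v) = fderiv 𝕜 f z v := by
  have h := σ.comp_right_fderiv (f := f) (x := z)
  rw [hf, hz] at h
  exact (DFunLike.congr_fun h v).symm

theorem fderiv_apply_comp_perm_eq {ι : Type*} [Fintype ι] {f : (ι → E) → G} (e : Perm ι)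
    (hf : ∀ z, f (z ∘ e) = f z) {z : ι → E} (hz : z ∘ e = z) (v : ι → E) :
    fderiv 𝕜 f z (v ∘ e) = fderiv 𝕜 f z v :=
  fderiv_apply_map_eq_of_comp_eq (f := f)
    (ContinuousLinearEquiv.piCongrLeft 𝕜 (fun _ => E) e).symm (funext hf) hz v

end

theorem comp_swap_eq_self {ι α : Type*} [DecidableEq ι] {z : ι → α} {i j : ι} (h : z i = z j) :
    z ∘ swap i j = z := by
  funext k
  rcases eq_or_ne k i with rfl | hki
  · simp [h]
  rcases eq_or_ne k j with rfl | hkj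
  · simp [h]
  · simp [swap_apply_of_ne_of_ne hki hkj]

theorem Pi.single_comp_swap {ι α : Type*} [DecidableEq ι] [Zero α] (i j : ι) (a : α) :
    Pi.single i a ∘ swap i j = Pi.single j a := by
  rw [Pi.single, update_comp_equiv]
  simp [Pi.single]

theorem ig_symmetry_preserving_general {n : ℕ} (F : (Fin n → ℝ) → ℝ)
    (i j : Fin n)
    (hsym : ∀ z : Fin n → ℝ, F (z ∘ Equiv.swap i j) = F z)
    (x x' : Fin n → ℝ) (hx : x i = x j) (hx' : x' i = x' j) :
    (x i - x' i) *
        ∫ t in (0:ℝ)..1, fderiv ℝ F (x' + t • (x - x')) (Pi.single i 1)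
      = (x j - x' j) *
        ∫ t in (0:ℝ)..1, fderiv ℝ F (x' + t • (x - x')) (Pi.single j 1) := by
  rw [hx, hx']
  congr 1
  refine intervalIntegral.integral_congr fun t _ => ?_
  have hz : (x' + t • (x - x')) ∘ swap i j = x' + t • (x - x') :=
    comp_swap_eq_self (by simp [hx, hx'])
  rw [← Pi.single_comp_swap i j, fderiv_apply_comp_perm_eq _ hsym hz]

/-- Integrated Gradients is symmetry preserving: if `F` is C¹ and symmetric in
coordinates `i` and `j`, and `x i = x j`, `x' i = x' j`, then the IG attributions
to coordinates `i` and `j` coincide. -/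
theorem ig_symmetry_preserving {n : ℕ} (F : (Fin n → ℝ) → ℝ) (hF : ContDiff ℝ 1 F)
    (i j : Fin n)
    (hsym : ∀ z : Fin n → ℝ, F (z ∘ Equiv.swap i j) = F z)
    (x x' : Fin n → ℝ) (hx : x i = x j) (hx' : x' i = x' j) :
    (x i - x' i) *
        ∫ t in (0:ℝ)..1, fderiv ℝ F (x' + t • (x - x')) (Pi.single i 1)
      = (x j - x' j) *
        ∫ t in (0:ℝ)..1, fderiv ℝ F (x' + t • (x - x')) (Pi.single j 1) :=
  ig_symmetry_preserving_general F i j hsym x x' hx hx'
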